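/- arXiv:0704.2845 — 6 statements merged into one kernel-verified Lean document; each statement's English description precedes it below -/
import Mathlib

section
/- Let s and t be integers with s, t ≥ 2 such that st is a perfect square (as holds for the order (s, t) of any finite generalized hexagon), and set u = (1 + s)(1 + st + s²t²), the number of points of a generalized hexagon of order (s, t). Then a(u)³ ≤ u. -/
/-! Writing `n = st`, we have `u = (1 + s)(n² + n + 1)`. Modulo a prime `p ∣ n² + n + 1` the
residue of `n` is a cube root of unity, so `p = 3` or `n` has order 3 and `p ≡ 1 (mod 3)`;
moreover `9 ∤ n² + n + 1`. Hence `a(u)` divides `1 + s`, and `(1 + s)² ≤ n² + n + 1` for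
`t ≥ 2` gives `a(u)³ ≤ (1 + s)³ ≤ u`. -/

/-- For `n = 3^α · p₁^{α₁} ⋯ p_k^{α_k}` (the `p_i` distinct primes different from 3),
`a(n) = 3^{max(0, α−1)} · ∏_{p_i ≢ 1 (mod 3)} p_i^{α_i}`. -/
def aFun (n : ℕ) : ℕ :=
  3 ^ (n.factorization 3 - 1) *
    Finset.prod n.primeFactors
      (fun p => if p ≠ 3 ∧ p % 3 ≠ 1 then p ^ n.factorization p else 1)

/-- For `n = 3^α · p₁^{α₁} ⋯ p_k^{α_k}` (the `p_i` distinct primes different from 3),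
`b(n) = ∏_{p_i ≢ 1 (mod 4)} p_i^{α_i}`. -/
def bFun (n : ℕ) : ℕ :=
  Finset.prod n.primeFactors
    (fun p => if p ≠ 3 ∧ p % 4 ≠ 1 then p ^ n.factorization p else 1)

theorem Nat.Prime.eq_three_or_mod_three_eq_one_of_dvd_sq_add_add_one {p n : ℕ} (hp : p.Prime)
    (hdvd : p ∣ n ^ 2 + n + 1) : p = 3 ∨ p % 3 = 1 := by
  have := Fact.mk hp
  have hx : (n : ZMod p) ^ 2 + n + 1 = 0 := by
    exact_mod_cast (ZMod.natCast_eq_zero_iff _ p).mpr hdvd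
  have hx0 : (n : ZMod p) ≠ 0 := fun h => by simp [h] at hx
  have hcube : (n : ZMod p) ^ 3 = 1 := by linear_combination ((n : ZMod p) - 1) * hx
  rcases (Nat.dvd_prime Nat.prime_three).mp (orderOf_dvd_of_pow_eq_one hcube) with hord1 | hord3
  · left
    rw [orderOf_eq_one_iff.mp hord1] at hx
    have h30 : ((3 : ℕ) : ZMod p) = 0 := by rw [← hx]; push_cast; ring
    exact (Nat.prime_dvd_prime_iff_eq hp Nat.prime_three).mp ((ZMod.natCast_eq_zero_iff _ p).mp h30)
  · right
    have := hord3 ▸ ZMod.orderOf_dvd_card_sub_one hx0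
    have := hp.two_le
    omega

theorem not_nine_dvd_sq_add_add_one (n : ℕ) : ¬ 9 ∣ n ^ 2 + n + 1 := by
  rw [← ZMod.natCast_eq_zero_iff]
  push_cast
  generalize (n : ZMod 9) = x
  revert x
  decide

theorem Nat.prod_primeFactors_pow_factorization_of_dvd {d n : ℕ} (hdn : d ∣ n) (hn : n ≠ 0) :
    ∏ p ∈ n.primeFactors, p ^ d.factorization p = d := by
  have hsupp : d.factorization.support ⊆ n.primeFactors :=
    Nat.support_factorization d ▸ Nat.primeFactors_mono hdn hn
  rw [← Finsupp.prod_of_support_subset _ hsupp (fun p k => p ^ k) (fun _ _ => pow_zero _)]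
  exact Nat.prod_factorization_pow_eq_self (ne_zero_of_dvd_ne_zero hn hdn)

theorem aFun_mul_dvd_left {d e : ℕ} (hd : d ≠ 0) (he : e ≠ 0) (he9 : ¬ 9 ∣ e)
    (he_primes : ∀ p, p.Prime → p ∣ e → p ≠ 3 → p % 3 = 1) : aFun (d * e) ∣ d := by
  have hde : d * e ≠ 0 := mul_ne_zero hd he
  have hfac (p : ℕ) : (d * e).factorization p = d.factorization p + e.factorization p := by
    simp [Nat.factorization_mul hd he]
  have hthree : 3 ^ ((d * e).factorization 3 - 1) ∣ d := by
    have he3 : e.factorization 3 ≤ 1 := by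
      by_contra! h
      exact he9 ((Nat.prime_three.pow_dvd_iff_le_factorization he).mpr h)
    exact (pow_dvd_pow 3 (by have := hfac 3; omega)).trans (Nat.ordProj_dvd d 3)
  have hprimes : ∏ p ∈ (d * e).primeFactors,
      (if p ≠ 3 ∧ p % 3 ≠ 1 then p ^ (d * e).factorization p else 1) ∣ d := by
    conv_rhs => rw [← Nat.prod_primeFactors_pow_factorization_of_dvd (dvd_mul_right d e) hde]
    refine Finset.prod_dvd_prod_of_dvd _ _ fun p hp => ?_
    split_ifs with h
    · have hpe : ¬ p ∣ e := fun hpe =>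
        h.2 (he_primes p (Nat.prime_of_mem_primeFactors hp) hpe h.1)
      rw [hfac p, Nat.factorization_eq_zero_of_not_dvd hpe, add_zero]
    · exact one_dvd _
  have hcop : Nat.Coprime (3 ^ ((d * e).factorization 3 - 1)) (∏ p ∈ (d * e).primeFactors,
      (if p ≠ 3 ∧ p % 3 ≠ 1 then p ^ (d * e).factorization p else 1)) := by
    refine Nat.Coprime.pow_left _ (Nat.Coprime.prod_right fun p hp => ?_)
    split_ifs with h
    · exact Nat.Coprime.pow_right _
        ((Nat.coprime_primes Nat.prime_three (Nat.prime_of_mem_primeFactors hp)).mpr (Ne.symm h.1))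
    · exact Nat.coprime_one_right _
  exact hcop.mul_dvd_of_dvd_of_dvd hthree hprimes

theorem aFun_cube_le_hexagon_points_general (s t u : ℕ) (ht : 2 ≤ t)
    (hu : u = (1 + s) * (1 + s * t + s ^ 2 * t ^ 2)) :
    aFun u ^ 3 ≤ u := by
  have hpoints : 1 + s * t + s ^ 2 * t ^ 2 = (s * t) ^ 2 + s * t + 1 := by ring
  rw [hpoints] at hu
  have hdvd : aFun u ∣ 1 + s := hu ▸ aFun_mul_dvd_left (by omega) (by positivity)
    (not_nine_dvd_sq_add_add_one _) fun p hp hpdvd hp3 =>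
      (hp.eq_three_or_mod_three_eq_one_of_dvd_sq_add_add_one hpdvd).resolve_left hp3
  calc aFun u ^ 3 ≤ (1 + s) ^ 3 := Nat.pow_le_pow_left (Nat.le_of_dvd (by omega) hdvd) 3
    _ = (1 + s) * (1 + s) ^ 2 := by ring
    _ ≤ (1 + s) * ((s * t) ^ 2 + s * t + 1) := by
      have hst : 2 * s ≤ s * t := by nlinarith
      gcongr
      nlinarith
    _ = u := hu.symm

/-- If `s, t ≥ 2` and `st` is a perfect square, then the number of
points `u = (1+s)(1+st+s²t²)` of a generalized hexagon of order `(s,t)` satisfies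
`a(u)³ ≤ u`. -/
theorem aFun_cube_le_hexagon_points (s t u : ℕ) (hs : 2 ≤ s) (ht : 2 ≤ t)
    (hsq : ∃ m : ℕ, s * t = m ^ 2)
    (hu : u = (1 + s) * (1 + s * t + s ^ 2 * t ^ 2)) :
    aFun u ^ 3 ≤ u :=
  aFun_cube_le_hexagon_points_general s t u ht hu
end

section
/- Let s and t be integers with s, t ≥ 2 such that 2st is a perfect square (as holds for the order (s, t) of any finite generalized octagon), and set u = (1 + s)(1 + st)(1 + s²t²), the number of points of a generalized octagon of order (s, t). Then b(u)² ≤ u. -/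
lemma bFun_dvd_self (n : ℕ) : bFun n ∣ n := by
  rcases eq_or_ne n 0 with rfl | hn
  · exact dvd_zero _
  conv_rhs => rw [← Nat.prod_factorization_pow_eq_self hn]
  rw [Nat.prod_factorization_eq_prod_primeFactors]
  refine Finset.prod_dvd_prod_of_dvd _ _ fun p _ => ?_
  split_ifs
  · exact dvd_rfl
  · exact one_dvd _

lemma bFun_coprime_of_forall_prime_dvd_mod_four_eq_one {n B : ℕ}
    (hB : ∀ p, p.Prime → p ∣ B → p % 4 = 1) : (bFun n).Coprime B := by
  refine Nat.Coprime.prod_left fun p hp => ?_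
  have hp_prime := Nat.prime_of_mem_primeFactors hp
  split_ifs with hp4
  · exact Nat.Coprime.pow_left _
      ((hp_prime.coprime_iff_not_dvd).2 fun hpB => hp4.2 (hB p hp_prime hpB))
  · exact Nat.coprime_one_left _

lemma bFun_dvd_of_eq_mul_of_forall_prime_dvd_mod_four_eq_one {n A B : ℕ} (hn : n = A * B)
    (hB : ∀ p, p.Prime → p ∣ B → p % 4 = 1) : bFun n ∣ A :=
  (bFun_coprime_of_forall_prime_dvd_mod_four_eq_one hB).dvd_of_dvd_mul_right
    (hn ▸ bFun_dvd_self n)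

lemma Nat.Prime.mod_four_eq_one_of_dvd_sq_add_one {p x : ℕ} (hp : p.Prime) (hx : Even x)
    (hpx : p ∣ x ^ 2 + 1) : p % 4 = 1 := by
  have : Fact p.Prime := ⟨hp⟩
  have hp3 : p % 4 ≠ 3 := by
    refine ZMod.mod_four_ne_three_of_sq_eq_neg_one (y := (x : ZMod p)) ?_
    have h0 := (ZMod.natCast_eq_zero_iff _ p).2 hpx
    push_cast at h0
    linear_combination h0
  have hp2 : p ≠ 2 := by
    rintro rfl
    exact Nat.not_even_iff_odd.2 (Nat.even_pow.2 ⟨hx, two_ne_zero⟩).add_one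
      (even_iff_two_dvd.2 hpx)
  have hp_odd : p % 2 = 1 := hp.eq_two_or_odd.resolve_left hp2
  omega

lemma even_of_two_mul_eq_sq {n m : ℕ} (h : 2 * n = m ^ 2) : Even n := by
  obtain ⟨k, rfl⟩ : 2 ∣ m := Nat.prime_two.dvd_of_dvd_pow ⟨n, h.symm⟩
  exact ⟨k ^ 2, by linarith⟩

lemma bFun_sq_le_of_eq_mul_sq_add_one {n A x : ℕ} (hx : Even x) (hA : 0 < A)
    (hAx : A ≤ x ^ 2 + 1) (hn : n = A * (x ^ 2 + 1)) : bFun n ^ 2 ≤ n := by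
  have hdvd : bFun n ∣ A := bFun_dvd_of_eq_mul_of_forall_prime_dvd_mod_four_eq_one hn
    fun _ hp hpx => hp.mod_four_eq_one_of_dvd_sq_add_one hx hpx
  have hle : bFun n ≤ A := Nat.le_of_dvd hA hdvd
  calc bFun n ^ 2 = bFun n * bFun n := sq _
    _ ≤ A * (x ^ 2 + 1) := Nat.mul_le_mul hle (hle.trans hAx)
    _ = n := hn.symm

lemma one_add_mul_one_add_mul_le_sq_add_one {s t : ℕ} (hs : 2 ≤ s) (ht : 2 ≤ t) :
    (1 + s) * (1 + s * t) ≤ (s * t) ^ 2 + 1 := by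
  have h2 : 2 * (s * t) ≤ s * (s * t) := Nat.mul_le_mul_right _ hs
  have h3 : 2 * (s * (s * t)) ≤ (s * t) ^ 2 := by
    rw [sq, mul_comm s t, mul_assoc]; exact Nat.mul_le_mul_right _ ht
  nlinarith

/-- If `s, t ≥ 2` and `2st` is a perfect square, then the number of
points `u = (1+s)(1+st)(1+s²t²)` of a generalized octagon of order `(s,t)` satisfies
`b(u)² ≤ u`. -/
theorem bFun_sq_le_octagon_points (s t u : ℕ) (hs : 2 ≤ s) (ht : 2 ≤ t)
    (hsq : ∃ m : ℕ, 2 * s * t = m ^ 2)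
    (hu : u = (1 + s) * (1 + s * t) * (1 + s ^ 2 * t ^ 2)) :
    bFun u ^ 2 ≤ u := by
  obtain ⟨m, hm⟩ := hsq
  have hst : Even (s * t) := even_of_two_mul_eq_sq (by rw [← mul_assoc, hm])
  exact bFun_sq_le_of_eq_mul_sq_add_one hst (by positivity)
    (one_add_mul_one_add_mul_le_sq_add_one hs ht) (by rw [hu]; ring)
end

section
/- Let S = (P, L, I) be a finite generalized hexagon or generalized octagon, let x be a point, and let y₁ and y₂ be distinct points, each collinear with x, such that y₁ is not collinear with y₂. Suppose g₁ and g₂ are automorphisms of S with x·g₁ = y₁ and x·g₂ = y₂, and suppose g₁ and g₂ commute. Then y₁·g₂ = x and y₂·g₁ = x. -/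
open Equiv

/-- The incidence graph of a point-line geometry. -/
def incGraph {P L : Type*} (I : P → L → Prop) : SimpleGraph (P ⊕ L) where
  Adj x y := (∃ p l, x = Sum.inl p ∧ y = Sum.inr l ∧ I p l) ∨
             (∃ p l, x = Sum.inr l ∧ y = Sum.inl p ∧ I p l)
  symm := by
    constructor
    rintro x y (⟨p, l, rfl, rfl, h⟩ | ⟨p, l, rfl, rfl, h⟩)
    · exact Or.inr ⟨p, l, rfl, rfl, h⟩
    · exact Or.inl ⟨p, l, rfl, rfl, h⟩
  loopless := by
    constructor
    rintro x (⟨p, l, rfl, h2, -⟩ | ⟨p, l, rfl, h2, -⟩) <;> exact absurd h2 (by simp)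

/-- `S = (P, L, I)` is a generalized `n`-gon: thickness plus the incidence graph has
diameter `n` and girth `2n`. -/
def IsGenPolygon {P L : Type*} (n : ℕ) (I : P → L → Prop) : Prop :=
  (∀ p : P, 3 ≤ Nat.card {l : L // I p l}) ∧
  (∀ l : L, 3 ≤ Nat.card {p : P // I p l}) ∧
  (incGraph I).ediam = (n : ℕ∞) ∧
  (incGraph I).egirth = (2 * n : ℕ∞)

/-- The group of automorphisms of the geometry `(P, L, I)`, as a subgroup of
`Perm P × Perm L`. -/
def autGroup {P L : Type*} (I : P → L → Prop) : Subgroup (Perm P × Perm L) where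
  carrier := {g | ∀ p l, I p l ↔ I (g.1 p) (g.2 l)}
  one_mem' := by intro p l; simp
  mul_mem' := by
    intro a b ha hb p l
    simpa [Perm.mul_apply] using (hb p l).trans (ha (b.1 p) (b.2 l))
  inv_mem' := by
    intro a ha p l
    simpa using (ha (a⁻¹.1 p) (a⁻¹.2 l)).symm

/-- A subgroup `G` of `Perm P × Perm L` is flag-transitive on the geometry `(P, L, I)`. -/
def FlagTransitive {P L : Type*} (I : P → L → Prop)
    (G : Subgroup (Perm P × Perm L)) : Prop :=
  ∀ p l p' l', I p l → I p' l' → ∃ g ∈ G, g.1 p = p' ∧ g.2 l = l'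

/-- The induced action of `G` on the point set is primitive: it is transitive and
preserves no nontrivial partition (every block is trivial). -/
def PrimitiveOnPoints {P L : Type*} (G : Subgroup (Perm P × Perm L)) : Prop :=
  (∀ x y : P, ∃ g ∈ G, g.1 x = y) ∧
  ∀ B : Set P, (∀ g ∈ G, (g.1 : P → P) '' B = B ∨ Disjoint ((g.1 : P → P) '' B) B) →
    B.Subsingleton ∨ B = Set.univ

/-- The induced action of `G` on the line set is primitive. -/
def PrimitiveOnLines {P L : Type*} (G : Subgroup (Perm P × Perm L)) : Prop :=
  (∀ x y : L, ∃ g ∈ G, g.2 x = y) ∧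
  ∀ B : Set L, (∀ g ∈ G, (g.2 : L → L) '' B = B ∨ Disjoint ((g.2 : L → L) '' B) B) →
    B.Subsingleton ∨ B = Set.univ

/-- A group is almost simple if it has a normal subgroup `T` which is non-abelian simple
and is contained in every nontrivial normal subgroup (so `T` is the unique minimal normal
subgroup, the socle). -/
def IsAlmostSimple (G : Type*) [Group G] : Prop :=
  ∃ T : Subgroup G, T.Normal ∧ IsSimpleGroup T ∧ (∃ a b : T, a * b ≠ b * a) ∧
    ∀ N : Subgroup G, N.Normal → N ≠ ⊥ → T ≤ N

/-- Two distinct points are collinear if they are incident with a common line. -/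
def PointCollinear {P L : Type*} (I : P → L → Prop) (x y : P) : Prop :=
  x ≠ y ∧ ∃ l : L, I x l ∧ I y l

/-!
Put `z := y₁·g₂`; commutativity gives `z = x·g₁g₂ = y₂·g₁`. The automorphism `g₁` maps the
line `xy₂` to a line through `y₁` and `z`, and `g₂` maps the line `xy₁` to a line through `y₂`
and `z`. So `x` and `z` are both collinear with the non-collinear points `y₁` and `y₂`. If
`x ≠ z`, the lines involved close up into a circuit of length 4, 6 or 8 in the incidence
graph, which is impossible since its girth is 12 or 16.
-/

open SimpleGraph

lemma SimpleGraph.Walk.IsTrail.egirth_le_length_cons {V : Type*} {G : SimpleGraph V} {u v : V}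
    {h : G.Adj u v} {p : G.Walk v u} (hp : (Walk.cons h p).IsTrail) :
    G.egirth ≤ (Walk.cons h p).length :=
  Walk.IsCircuit.egirth_le_length ⟨hp, nofun⟩

section IncidenceGeometry

variable {P L : Type*} {I : P → L → Prop}

@[simp]
lemma incGraph_adj_inl_inr {p : P} {l : L} : (incGraph I).Adj (.inl p) (.inr l) ↔ I p l := by
  simp [incGraph]

@[simp]
lemma incGraph_adj_inr_inl {p : P} {l : L} : (incGraph I).Adj (.inr l) (.inl p) ↔ I p l := by
  simp [incGraph]

lemma line_eq_of_incident_of_incident (hI : 4 < (incGraph I).egirth) {p q : P} {l m : L}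
    (hpq : p ≠ q) (hpl : I p l) (hql : I q l) (hpm : I p m) (hqm : I q m) : l = m := by
  by_contra hlm
  let w : (incGraph I).Walk (.inl p) (.inl p) :=
    .cons (incGraph_adj_inl_inr.2 hpl) <| .cons (incGraph_adj_inr_inl.2 hql) <|
    .cons (incGraph_adj_inl_inr.2 hqm) <| .cons (incGraph_adj_inr_inl.2 hpm) .nil
  have hw : w.IsTrail := by simp [w, Walk.isTrail_def, hpq, hlm, Ne.symm hpq]
  exact hw.egirth_le_length_cons.not_gt hI

lemma eq_of_collinear_of_not_incident (hI : 6 < (incGraph I).egirth) {x z y : P} {l a b : L}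
    (hxl : I x l) (hzl : I z l) (hyl : ¬ I y l) (hxa : I x a) (hya : I y a)
    (hzb : I z b) (hyb : I y b) : x = z := by
  by_contra hxz
  have hab : a ≠ b := by
    rintro rfl
    have := line_eq_of_incident_of_incident (hI.trans' (by norm_num)) hxz hxa hzb hxl hzl
    exact hyl (this ▸ hya)
  have hxy : x ≠ y := by rintro rfl; exact hyl hxl
  have hzy : z ≠ y := by rintro rfl; exact hyl hzl
  have hla : l ≠ a := by rintro rfl; exact hyl hya
  have hlb : l ≠ b := by rintro rfl; exact hyl hyb
  let w : (incGraph I).Walk (.inl x) (.inl x) :=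
    .cons (incGraph_adj_inl_inr.2 hxl) <| .cons (incGraph_adj_inr_inl.2 hzl) <|
    .cons (incGraph_adj_inl_inr.2 hzb) <| .cons (incGraph_adj_inr_inl.2 hyb) <|
    .cons (incGraph_adj_inl_inr.2 hya) <| .cons (incGraph_adj_inr_inl.2 hxa) .nil
  have hw : w.IsTrail := by
    simp [w, Walk.isTrail_def, hxz, hxy, hzy, hla, hlb, Ne.symm hxz, Ne.symm hab, Ne.symm hxy]
  exact hw.egirth_le_length_cons.not_gt hI

lemma eq_of_collinear_of_not_collinear (hI : 8 < (incGraph I).egirth) {x z y₁ y₂ : P}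
    {l₁ l₂ m₁ m₂ : L} (hy : ∀ l, I y₁ l → ¬ I y₂ l)
    (hxl₁ : I x l₁) (hy₁l₁ : I y₁ l₁) (hxl₂ : I x l₂) (hy₂l₂ : I y₂ l₂)
    (hzm₁ : I z m₁) (hy₁m₁ : I y₁ m₁) (hzm₂ : I z m₂) (hy₂m₂ : I y₂ m₂) : x = z := by
  have hI₆ : 6 < (incGraph I).egirth := hI.trans' (by norm_num)
  by_cases hlm₁ : l₁ = m₁
  · subst hlm₁
    exact eq_of_collinear_of_not_incident hI₆ hxl₁ hzm₁ (hy _ hy₁l₁ ·) hxl₂ hy₂l₂ hzm₂ hy₂m₂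
  by_cases hlm₂ : l₂ = m₂
  · subst hlm₂
    exact eq_of_collinear_of_not_incident hI₆ hxl₂ hzm₂ (hy _ · hy₂l₂) hxl₁ hy₁l₁ hzm₁ hy₁m₁
  by_contra hxz
  have hxy₁ : x ≠ y₁ := by rintro rfl; exact hy _ hxl₂ hy₂l₂
  have hxy₂ : x ≠ y₂ := by rintro rfl; exact hy _ hy₁l₁ hxl₁
  have hzy₁ : z ≠ y₁ := by rintro rfl; exact hy _ hzm₂ hy₂m₂
  have hzy₂ : z ≠ y₂ := by rintro rfl; exact hy _ hy₁m₁ hzm₁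
  have hl₁l₂ : l₁ ≠ l₂ := by rintro rfl; exact hy _ hy₁l₁ hy₂l₂
  have hl₁m₂ : l₁ ≠ m₂ := by rintro rfl; exact hy _ hy₁l₁ hy₂m₂
  have hm₁l₂ : m₁ ≠ l₂ := by rintro rfl; exact hy _ hy₁m₁ hy₂l₂
  have hm₁m₂ : m₁ ≠ m₂ := by rintro rfl; exact hy _ hy₁m₁ hy₂m₂
  let w : (incGraph I).Walk (.inl x) (.inl x) :=
    .cons (incGraph_adj_inl_inr.2 hxl₁) <| .cons (incGraph_adj_inr_inl.2 hy₁l₁) <|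
    .cons (incGraph_adj_inl_inr.2 hy₁m₁) <| .cons (incGraph_adj_inr_inl.2 hzm₁) <|
    .cons (incGraph_adj_inl_inr.2 hzm₂) <| .cons (incGraph_adj_inr_inl.2 hy₂m₂) <|
    .cons (incGraph_adj_inl_inr.2 hy₂l₂) <| .cons (incGraph_adj_inr_inl.2 hxl₂) .nil
  have hw : w.IsTrail := by
    simp [w, Walk.isTrail_def, hxz, hxy₁, hxy₂, hzy₂, hl₁l₂, hl₁m₂, hm₁l₂, hm₁m₂, hlm₁,
      Ne.symm hxz, Ne.symm hxy₁, Ne.symm hxy₂, Ne.symm hzy₁, Ne.symm hlm₂]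
  exact hw.egirth_le_length_cons.not_gt hI

end IncidenceGeometry

theorem commuting_automorphisms_swap_back_general
    {P L : Type*} (I : P → L → Prop)
    (hS : IsGenPolygon 6 I ∨ IsGenPolygon 8 I)
    (x y₁ y₂ : P) (hy : y₁ ≠ y₂)
    (h1 : PointCollinear I x y₁) (h2 : PointCollinear I x y₂)
    (h12 : ¬ PointCollinear I y₁ y₂)
    (g₁ g₂ : Equiv.Perm P × Equiv.Perm L)
    (hg₁ : g₁ ∈ autGroup I) (hg₂ : g₂ ∈ autGroup I)
    (hx₁ : g₁.1 x = y₁) (hx₂ : g₂.1 x = y₂)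
    (hcomm : g₁ * g₂ = g₂ * g₁) :
    g₂.1 y₁ = x ∧ g₁.1 y₂ = x := by
  obtain ⟨-, l₁, hxl₁, hy₁l₁⟩ := h1
  obtain ⟨-, l₂, hxl₂, hy₂l₂⟩ := h2
  have hgirth : 8 < (incGraph I).egirth := by
    rcases hS with ⟨-, -, -, hS⟩ | ⟨-, -, -, hS⟩ <;> rw [hS] <;> norm_num
  have hz : g₁.1 y₂ = g₂.1 y₁ := by
    simpa [Perm.mul_apply, hx₁, hx₂] using congrArg (fun g : Perm P × Perm L ↦ g.1 x) hcomm
  have hxz : x = g₂.1 y₁ :=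
    eq_of_collinear_of_not_collinear hgirth (fun l h₁ h₂ ↦ h12 ⟨hy, l, h₁, h₂⟩)
      hxl₁ hy₁l₁ hxl₂ hy₂l₂ (hz ▸ (hg₁ y₂ l₂).mp hy₂l₂) (hx₁ ▸ (hg₁ x l₂).mp hxl₂)
      ((hg₂ y₁ l₁).mp hy₁l₁) (hx₂ ▸ (hg₂ x l₁).mp hxl₁)
  exact ⟨hxz.symm, hz.trans hxz.symm⟩

/-- Let `x, y₁, y₂` be points of a finite generalized hexagon or
octagon with `y₁ ≠ y₂`, each `yᵢ` collinear with `x`, and `y₁` not collinear with `y₂`.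
If commuting automorphisms `g₁, g₂` satisfy `x·g₁ = y₁` and `x·g₂ = y₂`, then
`y₁·g₂ = x` and `y₂·g₁ = x`. -/
theorem commuting_automorphisms_swap_back
    {P L : Type*} [Fintype P] [Fintype L] (I : P → L → Prop)
    (hS : IsGenPolygon 6 I ∨ IsGenPolygon 8 I)
    (x y₁ y₂ : P) (hy : y₁ ≠ y₂)
    (h1 : PointCollinear I x y₁) (h2 : PointCollinear I x y₂)
    (h12 : ¬ PointCollinear I y₁ y₂)
    (g₁ g₂ : Equiv.Perm P × Equiv.Perm L)
    (hg₁ : g₁ ∈ autGroup I) (hg₂ : g₂ ∈ autGroup I)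
    (hx₁ : g₁.1 x = y₁) (hx₂ : g₂.1 x = y₂)
    (hcomm : g₁ * g₂ = g₂ * g₁) :
    g₂.1 y₁ = x ∧ g₁.1 y₂ = x :=
  commuting_automorphisms_swap_back_general I hS x y₁ y₂ hy h1 h2 h12 g₁ g₂ hg₁ hg₂ hx₁ hx₂ hcomm
end

section
/- Let T be a finite non-abelian simple group, let k ≥ 1, and for each i ∈ {1, …, k} let α_i be an automorphism of T. Then the full diagonal subgroup D = { (α₁(t), α₂(t), …, α_k(t)) : t ∈ T } of the direct power T × ⋯ × T (k factors) is self-normalizing: the normalizer of D in T × ⋯ × T equals D. -/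
/-!
Write `x ∈ T^k` as `x i = α i (y i)`. If `x` normalizes the diagonal, then for each `t` the
conjugates `y i * t * (y i)⁻¹` are all equal to one and the same `s`, so every `(y j)⁻¹ * y i` is
central. A non-abelian simple group has trivial centre, hence all `y i` coincide and `x` lies in
the diagonal.
-/

theorem IsSimpleGroup.center_eq_bot {T : Type*} [Group T] [IsSimpleGroup T]
    (h : ∃ a b : T, a * b ≠ b * a) : Subgroup.center T = ⊥ := by
  refine (IsSimpleGroup.eq_bot_or_eq_top_of_normal _ inferInstance).resolve_right fun htop => ?_
  obtain ⟨a, b, hab⟩ := h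
  exact hab ((Subgroup.center_eq_top_iff.mp htop).is_comm.comm a b)

namespace Subgroup

variable {T ι : Type*} [Group T]

theorem eq_of_forall_conj_eq (hT : center T = ⊥) {a b : T}
    (h : ∀ t, a * t * a⁻¹ = b * t * b⁻¹) : a = b := by
  have hcentral : b⁻¹ * a ∈ center T := mem_center_iff.mpr fun t => by
    have := congrArg (fun u => b⁻¹ * u * a) (h t)
    simpa [mul_assoc] using this.symm
  rw [hT, mem_bot, inv_mul_eq_one] at hcentral
  exact hcentral.symm

def twistedDiagonal (α : ι → T ≃* T) : Subgroup (ι → T) :=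
  (MonoidHom.pi fun i => (α i : T →* T)).range

theorem mem_twistedDiagonal {α : ι → T ≃* T} {f : ι → T} :
    f ∈ twistedDiagonal α ↔ ∃ t, ∀ i, f i = α i t := by
  simp [twistedDiagonal, funext_iff, eq_comm]

theorem normalizer_twistedDiagonal (hT : center T = ⊥) (α : ι → T ≃* T) :
    normalizer (twistedDiagonal α : Set (ι → T)) = twistedDiagonal α := by
  refine le_antisymm (fun x hx => ?_) le_normalizer
  set y : ι → T := fun i => (α i).symm (x i)
  have hxy : ∀ i, x i = α i (y i) := fun i => ((α i).apply_symm_apply (x i)).symm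
  have hconj : ∀ i j t, y i * t * (y i)⁻¹ = y j * t * (y j)⁻¹ := by
    intro i j t
    obtain ⟨s, hs⟩ := mem_twistedDiagonal.mp <|
      (mem_normalizer_iff.mp hx _).mp (mem_twistedDiagonal.mpr ⟨t, fun _ => rfl⟩)
    have hs' : ∀ i, y i * t * (y i)⁻¹ = s := fun i =>
      (α i).injective (by simpa [hxy] using hs i)
    rw [hs' i, hs' j]
  rcases isEmpty_or_nonempty ι with hι | ⟨⟨j⟩⟩
  · exact mem_twistedDiagonal.mpr ⟨1, fun i => hι.elim i⟩
  · exact mem_twistedDiagonal.mpr ⟨y j, fun i => by rw [hxy, eq_of_forall_conj_eq hT (hconj i j)]⟩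

end Subgroup

theorem diagonal_subgroup_self_normalizing_general
    (T : Type*) [Group T] (hsimple : IsSimpleGroup T)
    (hnonabelian : ∃ a b : T, a * b ≠ b * a)
    (k : ℕ) (α : Fin k → (T ≃* T))
    (D : Subgroup (Fin k → T))
    (hD : ∀ f : Fin k → T, f ∈ D ↔ ∃ t : T, ∀ i, f i = α i t) :
    Subgroup.normalizer (D : Set (Fin k → T)) = D := by
  obtain rfl : D = Subgroup.twistedDiagonal α :=
    Subgroup.ext fun f => (hD f).trans Subgroup.mem_twistedDiagonal.symm
  exact Subgroup.normalizer_twistedDiagonal (hsimple.center_eq_bot hnonabelian) α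

/-- Let `T` be a finite non-abelian simple group, `k ≥ 1`, and
`α i` automorphisms of `T` for `i = 1, …, k`. Then the full diagonal subgroup
`D = {(α₁(t), …, α_k(t)) : t ∈ T}` of `T × ⋯ × T` is self-normalizing. -/
theorem diagonal_subgroup_self_normalizing
    (T : Type*) [Group T] [Finite T] (hsimple : IsSimpleGroup T)
    (hnonabelian : ∃ a b : T, a * b ≠ b * a)
    (k : ℕ) (hk : 1 ≤ k) (α : Fin k → (T ≃* T))
    (D : Subgroup (Fin k → T))
    (hD : ∀ f : Fin k → T, f ∈ D ↔ ∃ t : T, ∀ i, f i = α i t) :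
    Subgroup.normalizer (D : Set (Fin k → T)) = D :=
  diagonal_subgroup_self_normalizing_general T hsimple hnonabelian k α D hD
end

section
/- For all integers k ≥ 5 and ℓ ≥ 2, the inequality (k!)^(12ℓ) · (ℓ!)^12 ≥ (k^ℓ)!/2 holds if and only if ℓ = 2 and 5 ≤ k ≤ 10. -/
/-!
Write `F k l = (k!)^(12l) (l!)^12`. Since `(k^l)!` is even, the inequality says `(k^l)! ≤ 2 F k l`,
and for `l = 2`, `k ≤ 10` this is a finite check. Otherwise `(k^l)!` wins: passing from `n` to `N`
multiplies `n!` by at least `(n+1)^(N-n)`, which beats the factor `F` gains when `k` or `l` grows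
by one, so induction on `k` (for `l = 2` from `k = 11`, for `l = 3` from `k = 5`) and then on `l`
(from `l = 3`) gives `2 F k l < (k^l)!`.
-/

open Nat

lemma div_two_le_iff_le_two_mul_of_even {n a : ℕ} (hn : Even n) : n / 2 ≤ a ↔ n ≤ 2 * a := by
  obtain ⟨c, rfl⟩ := hn
  omega

lemma mul_lt_factorial_of_lt_factorial {a b n N : ℕ} (hnN : n ≤ N) (ha : a < n !)
    (hb : b ≤ (n + 1) ^ (N - n)) : a * b < N ! := by
  rcases b.eq_zero_or_pos with rfl | hb₀
  · simpa using N.factorial_pos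
  calc a * b < n ! * b := Nat.mul_lt_mul_of_pos_right ha hb₀
    _ ≤ n ! * (n + 1) ^ (N - n) := Nat.mul_le_mul_left _ hb
    _ ≤ (n + (N - n))! := factorial_mul_pow_le_factorial
    _ = N ! := by rw [Nat.add_sub_cancel' hnN]

lemma two_mul_lt_factorial_pow_of_le {l k₀ : ℕ}
    (hbase : 2 * (k₀ ! ^ (12 * l) * l ! ^ 12) < (k₀ ^ l)!)
    (hstep : ∀ k, k₀ ≤ k → (k + 1) ^ (12 * l) ≤ (k ^ l + 1) ^ ((k + 1) ^ l - k ^ l))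
    {k : ℕ} (hk : k₀ ≤ k) : 2 * (k ! ^ (12 * l) * l ! ^ 12) < (k ^ l)! := by
  induction k, hk using Nat.le_induction with
  | base => exact hbase
  | succ k hk ih =>
    calc 2 * ((k + 1)! ^ (12 * l) * l ! ^ 12)
        = 2 * (k ! ^ (12 * l) * l ! ^ 12) * (k + 1) ^ (12 * l) := by
          rw [factorial_succ, mul_pow]; ring
      _ < ((k + 1) ^ l)! :=
          mul_lt_factorial_of_lt_factorial (Nat.pow_le_pow_left k.le_succ l) ih (hstep k hk)

lemma pow_twelve_le_pow_of_le_two_mul {x N e : ℕ} (hx : x ≤ 2 * N) (hN : 64 ≤ N) (he : 14 ≤ e) :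
    x ^ 12 ≤ N ^ e :=
  calc x ^ 12 ≤ (2 * N) ^ 12 := Nat.pow_le_pow_left hx 12
    _ = 64 ^ 2 * N ^ 12 := by ring
    _ ≤ N ^ 2 * N ^ 12 := Nat.mul_le_mul_right _ (Nat.pow_le_pow_left hN 2)
    _ = N ^ 14 := by ring
    _ ≤ N ^ e := Nat.pow_le_pow_right (by omega) he

lemma two_mul_lt_factorial_sq {k : ℕ} (hk : 11 ≤ k) :
    2 * (k ! ^ (12 * 2) * 2 ! ^ 12) < (k ^ 2)! := by
  refine two_mul_lt_factorial_pow_of_le (by decide) (fun k hk ↦ ?_) hk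
  have hsq : (k + 1) ^ 2 = k ^ 2 + (2 * k + 1) := by ring
  rw [mul_comm, pow_mul]
  exact pow_twelve_le_pow_of_le_two_mul (by nlinarith) (by nlinarith) (by omega)

lemma two_mul_lt_factorial_cube {k : ℕ} (hk : 5 ≤ k) :
    2 * (k ! ^ (12 * 3) * 3 ! ^ 12) < (k ^ 3)! := by
  refine two_mul_lt_factorial_pow_of_le (by decide) (fun k hk ↦ ?_) hk
  have hcube : (k + 1) ^ 3 = k ^ 3 + (3 * k ^ 2 + 3 * k + 1) := by ring
  rw [mul_comm, pow_mul]
  exact pow_twelve_le_pow_of_le_two_mul (by nlinarith) (by nlinarith) (by omega)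

lemma factorial_mul_succ_pow_twelve_le {k m : ℕ} (hk : 5 ≤ k) (hm : 2 ≤ m) :
    (k ! * (m + 1)) ^ 12 ≤ (k ^ m + 1) ^ (k ^ (m + 1) - k ^ m) := by
  have hkm : k ≤ k ^ m := Nat.le_self_pow (by omega) k
  have hmk : m < k ^ m := m.lt_two_pow_self.trans_le (Nat.pow_le_pow_left (by omega) m)
  have hbase : k ! * (m + 1) ≤ (k ^ m + 1) ^ (k + 1) :=
    calc k ! * (m + 1) ≤ k ^ k * (k ^ m + 1) := Nat.mul_le_mul k.factorial_le_pow (by omega)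
      _ ≤ (k ^ m + 1) ^ k * (k ^ m + 1) := Nat.mul_le_mul_right _ (Nat.pow_le_pow_left (by omega) k)
      _ = (k ^ m + 1) ^ (k + 1) := (pow_succ _ _).symm
  have hexp : 12 * (k + 1) ≤ k ^ (m + 1) - k ^ m := by
    have hsq : k * k ≤ k ^ m := by
      simpa [sq] using Nat.pow_le_pow_right (by omega : 0 < k) hm
    have h5k : 5 * k ≤ k * k := Nat.mul_le_mul_right _ hk
    have h5km : k ^ m * 5 ≤ k ^ m * k := Nat.mul_le_mul_left _ hk
    rw [pow_succ]
    omega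
  calc (k ! * (m + 1)) ^ 12 ≤ ((k ^ m + 1) ^ (k + 1)) ^ 12 := Nat.pow_le_pow_left hbase 12
    _ = (k ^ m + 1) ^ (12 * (k + 1)) := by rw [← pow_mul, mul_comm]
    _ ≤ (k ^ m + 1) ^ (k ^ (m + 1) - k ^ m) := Nat.pow_le_pow_right (by omega) hexp

lemma two_mul_lt_factorial_pow_of_three_le {k l : ℕ} (hk : 5 ≤ k) (hl : 3 ≤ l) :
    2 * (k ! ^ (12 * l) * l ! ^ 12) < (k ^ l)! := by
  induction l, hl using Nat.le_induction with
  | base => exact two_mul_lt_factorial_cube hk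
  | succ m hm ih =>
    calc 2 * (k ! ^ (12 * (m + 1)) * (m + 1)! ^ 12)
        = 2 * (k ! ^ (12 * m) * m ! ^ 12) * (k ! * (m + 1)) ^ 12 := by
          rw [factorial_succ]; ring
      _ < (k ^ (m + 1))! :=
          mul_lt_factorial_of_lt_factorial (Nat.pow_le_pow_right (by omega) m.le_succ) ih
            (factorial_mul_succ_pow_twelve_le hk (by omega))

/-- For integers `k ≥ 5` and `ℓ ≥ 2`, the inequality
`(k!)^(12ℓ) · (ℓ!)^12 ≥ (k^ℓ)!/2` holds if and only if `ℓ = 2` and `5 ≤ k ≤ 10`. -/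
theorem factorial_pow_ge_iff (k l : ℕ) (hk : 5 ≤ k) (hl : 2 ≤ l) :
    (k ! ^ (12 * l) * l ! ^ 12 ≥ (k ^ l)! / 2) ↔ (l = 2 ∧ 5 ≤ k ∧ k ≤ 10) := by
  have heven : Even (k ^ l)! := even_iff_two_dvd.mpr <| Nat.dvd_factorial two_pos <|
    (by omega : 2 ≤ k).trans (Nat.le_self_pow (by omega) k)
  rw [ge_iff_le, div_two_le_iff_le_two_mul_of_even heven]
  constructor
  · intro hle
    rcases hl.eq_or_lt with rfl | hl₃
    · by_contra hk₁₀
      have := two_mul_lt_factorial_sq (k := k) (by omega)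
      omega
    · have := two_mul_lt_factorial_pow_of_three_le hk hl₃
      omega
  · rintro ⟨rfl, -, hk₁₀⟩
    interval_cases k <;> decide
end

section
/- For every integer m ≥ 1, setting q = 3^(2m+1) and u = q²(q² − q + 1), one has a(u)³ > u. (This rules out a finite generalized hexagon with a flag-transitive, point-primitive automorphism group with socle the Ree group ²G₂(q), whose point stabilizer in the socle has order q(q² − 1), since such a hexagon would have u points and would require a(u)³ ≤ u.) -/
theorem three_pow_factorization_sub_one_le_aFun (n : ℕ) :
    3 ^ (n.factorization 3 - 1) ≤ aFun n := by
  refine Nat.le_mul_of_pos_right _ (Finset.prod_pos fun p hp => ?_)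
  split_ifs
  · exact pow_pos (Nat.prime_of_mem_primeFactors hp).pos _
  · exact Nat.one_pos

theorem Nat.factorization_prime_pow_mul {p k t : ℕ} (hp : p.Prime) (ht : ¬ p ∣ t) :
    (p ^ k * t).factorization p = k := by
  have ht0 : t ≠ 0 := by rintro rfl; exact ht (dvd_zero p)
  rw [Nat.factorization_mul (pow_ne_zero k hp.ne_zero) ht0, Finsupp.add_apply,
    hp.factorization_pow, Finsupp.single_eq_same, Nat.factorization_eq_zero_of_not_dvd ht,
    add_zero]

theorem lt_aFun_pow_three {k t : ℕ} (hk : 4 ≤ k) (h3 : ¬ 3 ∣ t) (ht : t ≤ 3 ^ k) :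
    3 ^ k * t < aFun (3 ^ k * t) ^ 3 := by
  have ha : 3 ^ (k - 1) ≤ aFun (3 ^ k * t) := by
    simpa only [Nat.factorization_prime_pow_mul Nat.prime_three h3] using
      three_pow_factorization_sub_one_le_aFun (3 ^ k * t)
  calc 3 ^ k * t ≤ 3 ^ k * 3 ^ k := Nat.mul_le_mul_left _ ht
    _ = 3 ^ (2 * k) := by rw [← pow_add, two_mul]
    _ < 3 ^ (3 * (k - 1)) := Nat.pow_lt_pow_right (by norm_num) (by omega)
    _ = (3 ^ (k - 1)) ^ 3 := by rw [← pow_mul, mul_comm]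
    _ ≤ aFun (3 ^ k * t) ^ 3 := Nat.pow_le_pow_left ha 3

theorem not_three_dvd_sq_sub_add_one {q : ℕ} (hq : 3 ∣ q) : ¬ 3 ∣ q ^ 2 - q + 1 := by
  have h : 3 ∣ q ^ 2 - q := by
    rw [sq, ← Nat.mul_sub_one]
    exact hq.mul_right _
  omega

/-- For `m ≥ 1`, `q = 3^(2m+1)` and `u = q²(q² − q + 1)` one has
`a(u)³ > u`; this rules out a flag-transitive, point-primitive generalized hexagon
whose automorphism group has socle the Ree group `²G₂(q)` with point stabilizer of
order `q(q² − 1)` in the socle. -/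
theorem ree_group_hexagon_ruled_out (m q u : ℕ) (hm : 1 ≤ m)
    (hq : q = 3 ^ (2 * m + 1)) (hu : u = q ^ 2 * (q ^ 2 - q + 1)) :
    aFun u ^ 3 > u := by
  set t := q ^ 2 - q + 1
  have h3q : 3 ∣ q := hq ▸ dvd_pow_self 3 (by omega)
  have hq0 : 0 < q := hq ▸ by positivity
  have hq2 : q ^ 2 = 3 ^ (4 * m + 2) := by rw [hq, ← pow_mul]; ring_nf
  have hle : t ≤ q ^ 2 := by have := Nat.le_self_pow two_ne_zero q; omega
  rw [gt_iff_lt, hu, hq2]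
  exact lt_aFun_pow_three (by omega) (not_three_dvd_sq_sub_add_one h3q) (hq2 ▸ hle)
end
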